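/- arXiv:0811.2668 — 2 statements merged into one kernel-verified Lean document; each statement's English description precedes it below -/
import Mathlib

section
/- Let $(L,[p])$ be a non-abelian restricted Lie algebra over a field of characteristic $p>0$ which is simple as a restricted Lie algebra. Then the derived subalgebra $[L,L]$ is a simple Lie algebra (in the ordinary, non-restricted, sense). -/
/-- The universal Lie polynomial `sᵢ(x₀, x₁)` appearing in Jacobson's formula:
`sᵢ(x₀,x₁) = -(1/i) ∑ᵤ ad x_{u(1)} ∘ ⋯ ∘ ad x_{u(p-1)} (x₁)`, the sum running over all maps
`u : {1,…,p-1} → {0,1}` taking the value `0` exactly `i` times. -/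
noncomputable def jacobsonS (k L : Type*) [Field k] [LieRing L] [LieAlgebra k L]
    (p i : ℕ) (x₀ x₁ : L) : L :=
  -((i : k)⁻¹) • ∑ u ∈ Finset.univ.filter
      (fun u : Fin (p - 1) → Bool => (Finset.univ.filter (fun j => u j = false)).card = i),
    ((List.ofFn fun j : Fin (p - 1) => LieAlgebra.ad k L (if u j then x₁ else x₀)).prod) x₁

/-- `P : L → L` is a `p`-map, making `(L, P)` a restricted Lie algebra: `ad (P x) = (ad x)^p`,
`P (c • x) = c^p • P x`, and Jacobson's additivity formula holds. -/
noncomputable def IsPMap (k L : Type*) [Field k] [LieRing L] [LieAlgebra k L]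
    (p : ℕ) (P : L → L) : Prop :=
  (∀ x, LieAlgebra.ad k L (P x) = (LieAlgebra.ad k L x) ^ p) ∧
  (∀ (c : k) (x : L), P (c • x) = c ^ p • P x) ∧
  (∀ x y : L, P (x + y) = P x + P y + ∑ i ∈ Finset.Icc 1 (p - 1), jacobsonS k L p i x y)

/-!
If `I` is a nonzero ideal, the span of all `P^[n] x` with `x ∈ I` is a `P`-closed ideal, hence
all of `L`; since `ad (P^[n] x) = (ad x)^(p^n)`, bracketing with it lands in `I`, so
`[L, L] ⊆ I`. Applied to `I = [L, L]` this writes `L` as the span of iterated `p`-th powers of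
elements of `[L, L]`, and every subspace of `L` stable under `ad [L, L]` is then stable under
`ad L`. Thus an ideal `J` of `[L, L]` is an ideal of `L`, and `J ≠ 0` forces `[L, L] ⊆ J`.
The same mechanism turns an abelian `[L, L]` into a central one, and then `L` into an abelian
algebra.
-/

open LieAlgebra

section

variable {k L : Type*} [Field k] [LieRing L] [LieAlgebra k L]

theorem ad_pow_apply_mem {U : Submodule k L} {s t : L} (hU : ∀ u ∈ U, ⁅s, u⁆ ∈ U)
    (ht : ⁅s, t⁆ ∈ U) {m : ℕ} (hm : m ≠ 0) : (ad k L s ^ m) t ∈ U := by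
  obtain ⟨m, rfl⟩ := Nat.exists_eq_succ_of_ne_zero hm
  rw [pow_succ, Module.End.mul_apply, ad_apply, Module.End.pow_apply]
  exact Set.MapsTo.iterate hU m ht

theorem jacobsonS_mem (p i : ℕ) (x : L) {I : LieIdeal k L} {y : L} (hy : y ∈ I) :
    jacobsonS k L p i x y ∈ I := by
  refine I.smul_mem _ (I.sum_mem fun u _ => ?_)
  refine List.prod_induction (fun f : Module.End k L => ∀ z ∈ I, f z ∈ I)
    (fun f g hf hg z hz => hf _ (hg z hz)) (fun z hz => hz) ?_ y hy
  intro f hf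
  obtain ⟨j, rfl⟩ := List.mem_ofFn.mp hf
  exact fun z hz => I.lie_mem hz

variable (k) in
def pClosure (P : L → L) (S : Set L) : Submodule k L :=
  Submodule.span k (⋃ n, P^[n] '' S)

theorem pClosure_le_iff {P : L → L} {S : Set L} {U : Submodule k L} :
    pClosure k P S ≤ U ↔ ∀ n, ∀ s ∈ S, P^[n] s ∈ U := by
  simp only [pClosure, Submodule.span_le, Set.iUnion_subset_iff, Set.image_subset_iff]
  rfl

theorem subset_pClosure (P : L → L) (S : Set L) : S ⊆ pClosure k P S :=
  fun s hs => Submodule.subset_span (Set.mem_iUnion.2 ⟨0, s, hs, rfl⟩)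

namespace IsPMap

variable {p : ℕ} {P : L → L}

theorem ad_iterate (hP : IsPMap k L p P) (n : ℕ) (x : L) :
    ad k L (P^[n] x) = ad k L x ^ p ^ n := by
  induction n with
  | zero => simp
  | succ n ih => rw [Function.iterate_succ_apply', hP.1, ih, ← pow_mul, ← pow_succ]

theorem map_zero (hP : IsPMap k L p P) (hp : p ≠ 0) : P 0 = 0 := by
  simpa [zero_pow hp] using hP.2.1 0 0

theorem map_mem_of_toSubmodule_eq_span (hP : IsPMap k L p P) (hp : p ≠ 0) {I : LieIdeal k L}
    {G : Set L} (hIG : (I : Submodule k L) = Submodule.span k G) (hG : ∀ g ∈ G, P g ∈ I)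
    {x : L} (hx : x ∈ I) : P x ∈ I := by
  have hx' : x ∈ Submodule.span k G := hIG ▸ hx
  clear hx
  induction hx' using Submodule.span_induction with
  | mem g hg => exact hG g hg
  | zero => rw [hP.map_zero hp]; exact zero_mem I
  | add a b _ hb iha ihb =>
    rw [hP.2.2]
    exact add_mem (add_mem iha ihb)
      (I.sum_mem fun i _ => jacobsonS_mem p i a (show b ∈ (I : Submodule k L) from hIG ▸ hb))
  | smul c a _ iha => rw [hP.2.1]; exact I.smul_mem _ iha

/-- The hypothesis only involves the operators `ad s` because `ad (P^[n] s) = (ad s)^(p^n)`. -/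
theorem lie_mem_of_mem_pClosure (hP : IsPMap k L p P) (hp : p ≠ 0) {S : Set L}
    {U : Submodule k L} {t : L} (h : ∀ s ∈ S, ∀ m ≠ 0, (ad k L s ^ m) t ∈ U) {x : L}
    (hx : x ∈ pClosure k P S) : ⁅x, t⁆ ∈ U := by
  have hle : pClosure k P S ≤ U.comap (ad k L t) := pClosure_le_iff.2 fun n s hs => by
    rw [Submodule.mem_comap, ad_apply, ← lie_skew, ← ad_apply k L, hP.ad_iterate]
    exact neg_mem (h s hs _ (pow_ne_zero n hp))
  rw [← lie_skew]
  exact neg_mem (hle hx)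

theorem lie_eq_zero_of_mem_pClosure (hP : IsPMap k L p P) (hp : p ≠ 0) {S : Set L} {t : L}
    (h : ∀ s ∈ S, ⁅s, t⁆ = 0) {x : L} (hx : x ∈ pClosure k P S) : ⁅x, t⁆ = 0 := by
  refine (Submodule.mem_bot k).1 (hP.lie_mem_of_mem_pClosure hp (fun s hs m hm => ?_) hx)
  refine ad_pow_apply_mem (fun u hu => ?_) (by rw [h s hs]; exact zero_mem _) hm
  rw [(Submodule.mem_bot k).1 hu, lie_zero]
  exact zero_mem _

theorem lie_mem_of_mem_pClosure_lieIdeal (hP : IsPMap k L p P) (hp : p ≠ 0) {I : LieIdeal k L}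
    (x : L) {y : L} (hy : y ∈ pClosure k P I) : ⁅x, y⁆ ∈ I := by
  rw [← lie_skew]
  refine neg_mem (hP.lie_mem_of_mem_pClosure hp (fun s hs m hm => ?_) hy)
  exact ad_pow_apply_mem (fun u hu => I.lie_mem hu) (lie_mem_left k L I s x hs) hm

def pClosureIdeal (hP : IsPMap k L p P) (hp : p ≠ 0) (I : LieIdeal k L) : LieIdeal k L where
  toSubmodule := pClosure k P I
  lie_mem hy := subset_pClosure P _ (hP.lie_mem_of_mem_pClosure_lieIdeal hp _ hy)

theorem le_pClosureIdeal (hP : IsPMap k L p P) (hp : p ≠ 0) (I : LieIdeal k L) :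
    I ≤ hP.pClosureIdeal hp I :=
  fun _ hx => subset_pClosure P _ hx

theorem map_mem_pClosureIdeal (hP : IsPMap k L p P) (hp : p ≠ 0) (I : LieIdeal k L) {x : L}
    (hx : x ∈ hP.pClosureIdeal hp I) : P x ∈ hP.pClosureIdeal hp I := by
  refine hP.map_mem_of_toSubmodule_eq_span hp rfl (fun g hg => ?_) hx
  obtain ⟨n, s, hs, rfl⟩ := Set.mem_iUnion.1 hg
  rw [← Function.iterate_succ_apply' P n s]
  exact Submodule.subset_span (Set.mem_iUnion.2 ⟨n + 1, s, hs, rfl⟩)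

section RestrictedSimple

variable (hP : IsPMap k L p P) (hp : p ≠ 0)
  (hsimple : ∀ I : LieIdeal k L, (∀ x ∈ I, P x ∈ I) → I = ⊥ ∨ I = ⊤)
include hP hp hsimple

theorem pClosure_eq_top_of_ne_bot {I : LieIdeal k L} (hI : I ≠ ⊥) : pClosure k P I = ⊤ := by
  have hne : hP.pClosureIdeal hp I ≠ ⊥ := ne_bot_of_le_ne_bot hI (hP.le_pClosureIdeal hp I)
  have htop := (hsimple _ fun _ => hP.map_mem_pClosureIdeal hp I).resolve_left hne
  exact congrArg LieSubmodule.toSubmodule htop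

theorem lie_mem_of_ne_bot {I : LieIdeal k L} (hI : I ≠ ⊥) (x y : L) : ⁅x, y⁆ ∈ I :=
  hP.lie_mem_of_mem_pClosure_lieIdeal hp x
    (by rw [hP.pClosure_eq_top_of_ne_bot hp hsimple hI]; exact Submodule.mem_top)

theorem lieIdeal_eq_bot_or_eq_top_of_le_derived {D : LieIdeal k L}
    (hD : pClosure k P D = ⊤) (hD' : D ≤ ⁅(⊤ : LieIdeal k L), ⊤⁆)
    (J : LieIdeal k D) : J = ⊥ ∨ J = ⊤ := by
  let T : Submodule k L := (J : Submodule k D).map D.incl.toLinearMap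
  have hT : ∀ s ∈ D, ∀ t ∈ T, ⁅s, t⁆ ∈ T := by
    rintro s hs _ ⟨a, ha, rfl⟩
    exact ⟨⁅⟨s, hs⟩, a⁆, J.lie_mem ha, rfl⟩
  let J' : LieIdeal k L :=
    { T with
      lie_mem := fun ht => hP.lie_mem_of_mem_pClosure hp
        (fun s hs _ hm => ad_pow_apply_mem (hT s hs) (hT s hs _ ht) hm)
        (hD ▸ Submodule.mem_top) }
  refine (eq_or_ne J ⊥).imp_right fun hJ => eq_top_iff.2 fun a _ => ?_
  have hJ' : J' ≠ ⊥ := by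
    contrapose! hJ
    refine (LieSubmodule.eq_bot_iff J).2 fun a ha => Subtype.ext ?_
    have ha' : (a : L) ∈ J' := ⟨a, ha, rfl⟩
    rwa [hJ, LieSubmodule.mem_bot] at ha'
  have hDJ' : ⁅(⊤ : LieIdeal k L), ⊤⁆ ≤ J' :=
    (LieSubmodule.lie_le_iff _ _ _).2 fun x _ y _ => hP.lie_mem_of_ne_bot hp hsimple hJ' x y
  obtain ⟨b, hb, hba⟩ := hDJ' (hD' a.2)
  rwa [← Subtype.ext hba]

end RestrictedSimple

theorem isLieAbelian_of_pClosure_eq_top (hP : IsPMap k L p P) (hp : p ≠ 0) {D : LieIdeal k L}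
    (hD : pClosure k P D = ⊤) (hab : IsLieAbelian D) : IsLieAbelian L := by
  have hmem : ∀ x : L, x ∈ pClosure k P D := fun x => hD ▸ Submodule.mem_top
  have hDD : ∀ s ∈ D, ∀ t ∈ D, ⁅s, t⁆ = 0 := fun s hs t ht =>
    congrArg Subtype.val (trivial_lie_zero D D ⟨s, hs⟩ ⟨t, ht⟩)
  have hcentral : ∀ t ∈ D, ∀ x : L, ⁅x, t⁆ = 0 := fun t ht x =>
    hP.lie_eq_zero_of_mem_pClosure hp (fun s hs => hDD s hs t ht) (hmem x)
  refine ⟨fun x y => hP.lie_eq_zero_of_mem_pClosure hp (fun s hs => ?_) (hmem x)⟩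
  rw [← lie_skew, hcentral s hs y, neg_zero]

end IsPMap

end

theorem derived_of_restricted_simple_is_simple_general
    (k : Type*) [Field k] (p : ℕ) [Fact p.Prime]
    (L : Type*) [LieRing L] [LieAlgebra k L]
    (P : L → L) (hP : IsPMap k L p P)
    (hsimple : ∀ I : LieIdeal k L, (∀ x ∈ I, P x ∈ I) → I = ⊥ ∨ I = ⊤)
    (hnonab : ∃ x y : L, ⁅x, y⁆ ≠ 0) :
    LieAlgebra.IsSimple k (⁅(⊤ : LieIdeal k L), (⊤ : LieIdeal k L)⁆ : LieIdeal k L) := by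
  have hp : p ≠ 0 := (Fact.out : p.Prime).ne_zero
  obtain ⟨x, y, hxy⟩ := hnonab
  have hD : pClosure k P (⁅(⊤ : LieIdeal k L), ⊤⁆ : LieIdeal k L) = ⊤ :=
    hP.pClosure_eq_top_of_ne_bot hp hsimple fun h => hxy <| by
      have hxy' : ⁅x, y⁆ ∈ (⁅(⊤ : LieIdeal k L), ⊤⁆ : LieIdeal k L) :=
        LieSubmodule.lie_mem_lie (LieSubmodule.mem_top x) (LieSubmodule.mem_top y)
      rwa [h, LieSubmodule.mem_bot] at hxy'
  exact ⟨hP.lieIdeal_eq_bot_or_eq_top_of_le_derived hp hsimple hD le_rfl,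
    fun hab => hxy ((hP.isLieAbelian_of_pClosure_eq_top hp hD hab).trivial x y)⟩

/-- If `(L, P)` is a non-abelian restricted Lie algebra over a field of characteristic `p > 0`
which is simple as a restricted Lie algebra, then the derived subalgebra `[L, L]` is a simple
Lie algebra in the ordinary (non-restricted) sense. -/
theorem derived_of_restricted_simple_is_simple
    (k : Type*) [Field k] (p : ℕ) [Fact p.Prime] [CharP k p]
    (L : Type*) [LieRing L] [LieAlgebra k L]
    (P : L → L) (hP : IsPMap k L p P)
    (hsimple : ∀ I : LieIdeal k L, (∀ x ∈ I, P x ∈ I) → I = ⊥ ∨ I = ⊤)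
    (hnonab : ∃ x y : L, ⁅x, y⁆ ≠ 0) :
    LieAlgebra.IsSimple k (⁅(⊤ : LieIdeal k L), (⊤ : LieIdeal k L)⁆ : LieIdeal k L) :=
  derived_of_restricted_simple_is_simple_general k p L P hP hsimple hnonab
end

section
/- Let $k$ be a field of characteristic $p > 3$ and let $A = k[X]/(X^p)$ be the truncated polynomial algebra. Then the Witt algebra $W(1) = \mathrm{Der}_k(A)$ is a simple Lie algebra. -/
/-!
Write `A = k[X]/(X^p)`, `x` for the class of `X` and `∂ = d/dx`, which is well defined because
`(X^p)' = p X^(p-1) = 0`. Every derivation of `A` is `(D x) • ∂`, and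
`⁅a • ∂, b • ∂⁆ = (a ∂b - b ∂a) • ∂`, so a Lie ideal `I` is governed by the subspace
`S = {a | a • ∂ ∈ I}`. Bracketing with `∂` makes `S` stable under `∂`; a nonzero element of `S`,
represented by a polynomial of degree `d < p`, differentiated `d` times gives the nonzero constant
`d! • lc`, so `1 ∈ S`. Then brackets with `a • ∂` show that `∂a ∈ S` (so `2x = ∂(x²) ∈ S`) and,
as `x ∈ S`, `a - x ∂a ∈ S`. For `a = x^m` these are `(m + 1) x^m` and `(1 - m) x^m`; as the
coefficients add up to `2 ≠ 0`, every `x^m` lies in `S`, hence `S = A` and `I` contains every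
`D = (D x) • ∂`.
-/

open Polynomial

theorem Polynomial.iterate_derivative_natDegree {R : Type*} [Semiring R] (q : R[X]) :
    derivative^[q.natDegree] q = C (q.natDegree.factorial • q.leadingCoeff) := by
  have hdeg : (derivative^[q.natDegree] q).natDegree ≤ 0 := by
    have := natDegree_iterate_derivative q q.natDegree
    omega
  rw [eq_C_of_natDegree_le_zero hdeg, coeff_iterate_derivative, zero_add, Nat.descFactorial_self,
    coeff_natDegree]

theorem Polynomial.X_pow_ne_one {R : Type*} [Semiring R] [Nontrivial R] {n : ℕ} (hn : n ≠ 0) :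
    (X : R[X]) ^ n ≠ 1 :=
  fun h => hn (by simpa using congrArg natDegree h)

abbrev TruncatedPolynomial (R : Type*) [CommRing R] (n : ℕ) : Type _ :=
  R[X] ⧸ Ideal.span {(X : R[X]) ^ n}

namespace TruncatedPolynomial

section CommRing

variable (R : Type*) [CommRing R] (n : ℕ)

noncomputable abbrev mk : R[X] →ₐ[R] TruncatedPolynomial R n :=
  Ideal.Quotient.mkₐ R _

noncomputable def x : TruncatedPolynomial R n := mk R n X

variable {R n}

theorem mk_surjective : Function.Surjective (mk R n) :=
  Ideal.Quotient.mkₐ_surjective R _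

theorem mk_eq_aeval_x (q : R[X]) : mk R n q = aeval (x R n) q := by
  rw [x, aeval_algHom_apply, aeval_X_left_apply]

theorem adjoin_x : Algebra.adjoin R {x R n} = ⊤ := by
  rw [x, ← Set.image_singleton (f := mk R n), ← AlgHom.map_adjoin, adjoin_X, Algebra.map_top,
    AlgHom.range_eq_top]
  exact mk_surjective

theorem exists_natDegree_lt_mk_eq [Nontrivial R] (hn : n ≠ 0) (a : TruncatedPolynomial R n) :
    ∃ q : R[X], q.natDegree < n ∧ mk R n q = a := by
  obtain ⟨r, rfl⟩ := mk_surjective a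
  refine ⟨r %ₘ X ^ n, ?_, ?_⟩
  · simpa using natDegree_modByMonic_lt r (monic_X_pow n) (X_pow_ne_one hn)
  · rw [Ideal.Quotient.mkₐ_eq_mk, Ideal.Quotient.mk_eq_mk_iff_sub_mem,
      modByMonic_eq_sub_mul_div r (X ^ n), sub_sub_cancel_left, Ideal.neg_mem_iff]
    exact Ideal.mem_span_singleton.2 (dvd_mul_right _ _)

theorem nontrivial [Nontrivial R] (hn : n ≠ 0) : Nontrivial (TruncatedPolynomial R n) := by
  refine Ideal.Quotient.nontrivial_iff.2 fun h => X_pow_ne_one (R := R) hn ?_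
  rwa [Ideal.span_singleton_eq_top, (monic_X_pow n).isUnit_iff] at h

theorem derivation_ext {M : Type*} [AddCommMonoid M] [Module (TruncatedPolynomial R n) M]
    [Module R M] {D E : Derivation R (TruncatedPolynomial R n) M} (h : D (x R n) = E (x R n)) :
    D = E :=
  Derivation.ext_of_adjoin_eq_top _ adjoin_x (Set.eqOn_singleton.2 h)

end CommRing

section Derivative

variable {R : Type*} [CommRing R] {p : ℕ} [CharP R p]

theorem mk_derivative_eq_zero (q : R[X]) (hq : mk R p q = 0) :
    mk R p (Polynomial.derivative q) = 0 := by
  rw [Ideal.Quotient.mkₐ_eq_mk, Ideal.Quotient.eq_zero_iff_mem, Ideal.mem_span_singleton'] at hq ⊢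
  obtain ⟨r, rfl⟩ := hq
  refine ⟨Polynomial.derivative r, ?_⟩
  rw [Polynomial.derivative_mul, derivative_X_pow, CharP.cast_eq_zero R p, map_zero, zero_mul,
    mul_zero, add_zero]

variable (R p)

noncomputable def derivative : Derivation R (TruncatedPolynomial R p) (TruncatedPolynomial R p) :=
  Derivation.liftOfSurjective mk_surjective (d := derivative') mk_derivative_eq_zero

variable {R p}

theorem derivative_mk (q : R[X]) : derivative R p (mk R p q) = mk R p (Polynomial.derivative q) :=
  Derivation.liftOfSurjective_apply mk_surjective mk_derivative_eq_zero q

theorem derivative_x : derivative R p (x R p) = 1 := by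
  rw [x, derivative_mk, derivative_X, map_one]

theorem eq_smul_derivative (D : Derivation R (TruncatedPolynomial R p) (TruncatedPolynomial R p)) :
    D = D (x R p) • derivative R p :=
  derivation_ext (by rw [Derivation.smul_apply, derivative_x, smul_eq_mul, mul_one])

theorem lie_smul_derivative (a b : TruncatedPolynomial R p) :
    ⁅a • derivative R p, b • derivative R p⁆ =
      (a * derivative R p b - b * derivative R p a) • derivative R p :=
  derivation_ext (by simp [Derivation.commutator_apply, derivative_x])

theorem derivative_x_pow_succ (m : ℕ) :
    derivative R p (x R p ^ (m + 1)) = (m + 1) • x R p ^ m := by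
  rw [Derivation.leibniz_pow, derivative_x, Nat.add_sub_cancel, smul_eq_mul, mul_one]

theorem x_mul_derivative_x_pow (m : ℕ) : x R p * derivative R p (x R p ^ m) = m • x R p ^ m := by
  cases m with
  | zero => simp
  | succ m => rw [derivative_x_pow_succ, mul_smul_comm, ← pow_succ']

end Derivative

end TruncatedPolynomial

abbrev WittAlgebra (R : Type*) [CommRing R] (p : ℕ) : Type _ :=
  Derivation R (TruncatedPolynomial R p) (TruncatedPolynomial R p)

namespace WittAlgebra

open TruncatedPolynomial

section CommRing

variable {R : Type*} [CommRing R] {p : ℕ} [CharP R p]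

noncomputable def coeffSubmodule (I : LieIdeal R (WittAlgebra R p)) :
    Submodule R (TruncatedPolynomial R p) :=
  I.toSubmodule.comap ((LinearMap.toSpanSingleton _ _ (derivative R p)).restrictScalars R)

variable {I : LieIdeal R (WittAlgebra R p)} {a : TruncatedPolynomial R p}

theorem mem_coeffSubmodule : a ∈ coeffSubmodule I ↔ a • derivative R p ∈ I := Iff.rfl

theorem derivative_mem_coeffSubmodule (ha : a ∈ coeffSubmodule I) :
    derivative R p a ∈ coeffSubmodule I := by
  have := I.lie_mem (x := (1 : TruncatedPolynomial R p) • derivative R p) (mem_coeffSubmodule.1 ha)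
  rwa [lie_smul_derivative, Derivation.map_one_eq_zero, one_mul, mul_zero, sub_zero] at this

theorem derivative_mem_coeffSubmodule_of_one_mem (h1 : 1 ∈ coeffSubmodule I) (a) :
    derivative R p a ∈ coeffSubmodule I := by
  have := lie_mem_left R _ I _ (a • derivative R p) (mem_coeffSubmodule.1 h1)
  rwa [lie_smul_derivative, Derivation.map_one_eq_zero, one_mul, mul_zero, sub_zero] at this

theorem sub_x_mul_derivative_mem_coeffSubmodule (hx : x R p ∈ coeffSubmodule I) (a) :
    a - x R p * derivative R p a ∈ coeffSubmodule I := by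
  have := I.lie_mem (x := a • derivative R p) (mem_coeffSubmodule.1 hx)
  rwa [lie_smul_derivative, derivative_x, mul_one] at this

theorem eq_top_of_coeffSubmodule_eq_top (h : coeffSubmodule I = ⊤) : I = ⊤ := by
  refine eq_top_iff.2 fun D _ => ?_
  rw [eq_smul_derivative D]
  exact mem_coeffSubmodule.1 (h ▸ Submodule.mem_top)

theorem coeffSubmodule_eq_top_of_x_pow_mem (h : ∀ m : ℕ, x R p ^ m ∈ coeffSubmodule I) :
    coeffSubmodule I = ⊤ := by
  refine Submodule.eq_top_iff'.2 fun a => ?_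
  obtain ⟨q, rfl⟩ := mk_surjective a
  rw [mk_eq_aeval_x, aeval_eq_sum_range]
  exact Submodule.sum_mem _ fun i _ => Submodule.smul_mem _ _ (h i)

theorem not_isLieAbelian [Nontrivial R] (hp : p ≠ 0) : ¬IsLieAbelian (WittAlgebra R p) := by
  intro h
  have := TruncatedPolynomial.nontrivial (R := R) hp
  have h0 : ⁅(1 : TruncatedPolynomial R p) • derivative R p, x R p • derivative R p⁆ = 0 :=
    trivial_lie_zero _ _ _ _
  rw [lie_smul_derivative, derivative_x, Derivation.map_one_eq_zero, one_mul, mul_zero, sub_zero,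
    one_smul] at h0
  have h1 := derivative_x (R := R) (p := p)
  rw [h0, Derivation.zero_apply] at h1
  exact zero_ne_one h1

end CommRing

section Field

variable {k : Type*} [Field k] {p : ℕ} [CharP k p] {I : LieIdeal k (WittAlgebra k p)}

theorem x_pow_mem_coeffSubmodule (h2 : (2 : k) ≠ 0) (h1 : 1 ∈ coeffSubmodule I) (m : ℕ) :
    x k p ^ m ∈ coeffSubmodule I := by
  have hder := derivative_mem_coeffSubmodule_of_one_mem h1
  have hx : x k p ∈ coeffSubmodule I := by
    have := hder (x k p ^ (1 + 1))
    rwa [derivative_x_pow_succ, pow_one, ← Nat.cast_smul_eq_nsmul k,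
      Submodule.smul_mem_iff _ (by norm_num [h2])] at this
  have hplus : ((m + 1 : ℕ) : k) • x k p ^ m ∈ coeffSubmodule I := by
    rw [Nat.cast_smul_eq_nsmul, ← derivative_x_pow_succ]
    exact hder _
  have hminus : (1 - (m : k)) • x k p ^ m ∈ coeffSubmodule I := by
    rw [sub_smul, one_smul, Nat.cast_smul_eq_nsmul, ← x_mul_derivative_x_pow]
    exact sub_x_mul_derivative_mem_coeffSubmodule hx _
  by_cases hm : ((m + 1 : ℕ) : k) = 0
  · refine (Submodule.smul_mem_iff _ fun h => h2 ?_).1 hminus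
    push_cast at hm
    linear_combination hm + h
  · exact (Submodule.smul_mem_iff _ hm).1 hplus

theorem one_mem_coeffSubmodule_of_ne_bot (hp : p ≠ 0) (hI : I ≠ ⊥) : 1 ∈ coeffSubmodule I := by
  have := Fact.mk (CharP.char_prime_of_ne_zero k hp)
  obtain ⟨D, hDI, hD0⟩ : ∃ D ∈ I, D ≠ 0 := by
    by_contra! h
    exact hI ((LieSubmodule.eq_bot_iff _).2 h)
  obtain ⟨q, hq_deg, hq⟩ := exists_natDegree_lt_mk_eq hp (D (x k p))
  have hq0 : q ≠ 0 := by
    rintro rfl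
    have hD := eq_smul_derivative D
    rw [← hq, map_zero] at hD
    exact hD0 (hD.trans (zero_smul (TruncatedPolynomial k p) (derivative k p)))
  have hiter : ∀ j, mk k p (Polynomial.derivative^[j] q) ∈ coeffSubmodule I := by
    intro j
    induction j with
    | zero =>
      rw [Function.iterate_zero_apply, hq, mem_coeffSubmodule, ← eq_smul_derivative]
      exact hDI
    | succ j ih =>
      rw [Function.iterate_succ_apply', ← derivative_mk]
      exact derivative_mem_coeffSubmodule ih
  have hc : (q.natDegree.factorial • q.leadingCoeff : k) ≠ 0 := by
    rw [nsmul_eq_mul]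
    exact mul_ne_zero ((IsUnit.natCast_factorial_iff_of_charP p).2 hq_deg).ne_zero
      (leadingCoeff_ne_zero.2 hq0)
  have := hiter q.natDegree
  rwa [iterate_derivative_natDegree, ← algebraMap_eq, AlgHom.commutes,
    Algebra.algebraMap_eq_smul_one, Submodule.smul_mem_iff _ hc] at this

theorem eq_bot_or_eq_top (h2 : (2 : k) ≠ 0) (hp : p ≠ 0) (I : LieIdeal k (WittAlgebra k p)) :
    I = ⊥ ∨ I = ⊤ :=
  or_iff_not_imp_left.2 fun hI => eq_top_of_coeffSubmodule_eq_top <|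
    coeffSubmodule_eq_top_of_x_pow_mem <|
      x_pow_mem_coeffSubmodule h2 (one_mem_coeffSubmodule_of_ne_bot hp hI)

end Field

end WittAlgebra

theorem wittAlgebra_isSimple_general
    (k : Type*) [Field k] (p : ℕ) [CharP k p] (hp : 3 < p) :
    LieAlgebra.IsSimple k
      (Derivation k (Polynomial k ⧸ Ideal.span {(Polynomial.X : Polynomial k) ^ p})
        (Polynomial k ⧸ Ideal.span {(Polynomial.X : Polynomial k) ^ p})) := by
  have h2 : (2 : k) ≠ 0 := by
    rw [← Nat.cast_ofNat, Ne, CharP.cast_eq_zero_iff k p]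
    exact Nat.not_dvd_of_pos_of_lt two_pos (by omega)
  exact ⟨WittAlgebra.eq_bot_or_eq_top h2 (p := p) (by omega),
    WittAlgebra.not_isLieAbelian (p := p) (by omega)⟩

/-- Over a field `k` of characteristic `p > 3`, the Witt algebra
`W(1) = Der_k(k[X]/(X^p))` is a simple Lie algebra. -/
theorem wittAlgebra_isSimple
    (k : Type*) [Field k] (p : ℕ) [Fact p.Prime] [CharP k p] (hp : 3 < p) :
    LieAlgebra.IsSimple k
      (Derivation k (Polynomial k ⧸ Ideal.span {(Polynomial.X : Polynomial k) ^ p})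
        (Polynomial k ⧸ Ideal.span {(Polynomial.X : Polynomial k) ^ p})) :=
  wittAlgebra_isSimple_general k p hp
end
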